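/- Let θ̂ minimize the original empirical loss ℓ̂ and θ̂′ minimize the perturbed empirical loss ℓ̂′ over ℝ^d. Fix a test point z_test and an index i ≠ j, and assume: (i) ℓ̂ and ℓ̂′ are m-strongly convex (m > 0); (ii) |ℓ(θ̂′, z) − ℓ(θ̂, z)| ≤ L‖θ̂′ − θ̂‖₂ for z ∈ {z_j, z_j′} with L > 0; (iii) for every k ∈ {1,…,n}, ‖∇²_θℓ(θ̂′, z_k) − ∇²_θℓ(θ̂, z_k)‖_op ≤ M‖θ̂′ − θ̂‖₂ with M > 0, and ‖∇²_θℓ(θ̂′, z_j)‖_op ≤ B, ‖∇²_θℓ(θ̂′, z_j′)‖_op ≤ B with B > 0; (iv) ‖∇_θℓ(θ, z)‖₂ ≤ G for θ ∈ {θ̂, θ̂′} and z ∈ {z_test, z_i} with G > 0; and (v) ‖∇_θℓ(θ̂′, z) − ∇_θℓ(θ̂, z)‖₂ ≤ S‖θ̂′ − θ̂‖₂ for z ∈ {z_test, z_i} with S > 0. Then the influence scores of the unperturbed training point z_i on z_test before and after the perturbation satisfy |τ′(z_i, z_test; θ̂′) − τ(z_i, z_test; θ̂)| ≤ (8GLSm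 + 4G²LM + 2G²Bm)/(m³ n); in particular the difference is O(1/n). -/

import Mathlib

open scoped RealInnerProductSpace

noncomputable section

/-- `f` is `m`-strongly convex on `ℝ^d`: `x ↦ f x - (m/2)‖x‖₂²` is convex. -/
def StrongConvexOnUniv {d : ℕ} (m : ℝ) (f : EuclideanSpace ℝ (Fin d) → ℝ) : Prop :=
  ConvexOn ℝ Set.univ fun x => f x - m / 2 * ‖x‖ ^ 2

/-- The Hessian `∇²f(θ)` of `f : ℝ^d → ℝ` at `θ`, as a linear operator on `ℝ^d`. -/
def hessian {d : ℕ} (f : EuclideanSpace ℝ (Fin d) → ℝ) (θ : EuclideanSpace ℝ (Fin d)) :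
    EuclideanSpace ℝ (Fin d) →L[ℝ] EuclideanSpace ℝ (Fin d) :=
  fderiv ℝ (fun x => gradient f x) θ

/-- The original empirical loss `ℓ̂(θ) = (1/n) ∑ᵢ ℓ(θ, zᵢ)`. -/
def empLoss {d n : ℕ} {Z : Type*} (ℓ : EuclideanSpace ℝ (Fin d) → Z → ℝ)
    (z : Fin n → Z) (θ : EuclideanSpace ℝ (Fin d)) : ℝ :=
  (1 / (n : ℝ)) * ∑ i, ℓ θ (z i)

/-- The perturbed empirical loss `ℓ̂′(θ) = (1/n) ∑_{i≠j} ℓ(θ, zᵢ) + (1/n) ℓ(θ, zⱼ′)`. -/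
def empLossPert {d n : ℕ} {Z : Type*} (ℓ : EuclideanSpace ℝ (Fin d) → Z → ℝ)
    (z : Fin n → Z) (j : Fin n) (z' : Z) (θ : EuclideanSpace ℝ (Fin d)) : ℝ :=
  (1 / (n : ℝ)) * ∑ i ∈ Finset.univ.erase j, ℓ θ (z i) + (1 / (n : ℝ)) * ℓ θ z'

/-- The empirical Hessian `H(θ) = (1/n) ∑ᵢ ∇²_θℓ(θ, zᵢ)`. -/
def empHess {d n : ℕ} {Z : Type*} (ℓ : EuclideanSpace ℝ (Fin d) → Z → ℝ)
    (z : Fin n → Z) (θ : EuclideanSpace ℝ (Fin d)) :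
    EuclideanSpace ℝ (Fin d) →L[ℝ] EuclideanSpace ℝ (Fin d) :=
  (1 / (n : ℝ)) • ∑ i, hessian (fun θ' => ℓ θ' (z i)) θ

/-- The perturbed empirical Hessian
`H′(θ) = (1/n) ∑_{i≠j} ∇²_θℓ(θ, zᵢ) + (1/n) ∇²_θℓ(θ, zⱼ′)`. -/
def empHessPert {d n : ℕ} {Z : Type*} (ℓ : EuclideanSpace ℝ (Fin d) → Z → ℝ)
    (z : Fin n → Z) (j : Fin n) (z' : Z) (θ : EuclideanSpace ℝ (Fin d)) :
    EuclideanSpace ℝ (Fin d) →L[ℝ] EuclideanSpace ℝ (Fin d) :=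
  (1 / (n : ℝ)) • ∑ i ∈ Finset.univ.erase j, hessian (fun θ' => ℓ θ' (z i)) θ +
    (1 / (n : ℝ)) • hessian (fun θ' => ℓ θ' z') θ


/-- The influence-function score of a training point `ztr` on a test point `ztest` for the
original dataset: `τ(ztr, ztest; θ) = -∇_θℓ(θ, ztest)ᵀ H(θ)⁻¹ ∇_θℓ(θ, ztr)`. -/
def tauIF {d n : ℕ} {Z : Type*} (ℓ : EuclideanSpace ℝ (Fin d) → Z → ℝ)
    (z : Fin n → Z) (ztr ztest : Z) (θ : EuclideanSpace ℝ (Fin d)) : ℝ :=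
  -⟪gradient (fun θ' => ℓ θ' ztest) θ,
    Ring.inverse (empHess ℓ z θ) (gradient (fun θ' => ℓ θ' ztr) θ)⟫

/-- The influence-function score of a training point `ztr` on a test point `ztest` for the
perturbed dataset: `τ′(ztr, ztest; θ) = -∇_θℓ(θ, ztest)ᵀ H′(θ)⁻¹ ∇_θℓ(θ, ztr)`. -/
def tauIFPert {d n : ℕ} {Z : Type*} (ℓ : EuclideanSpace ℝ (Fin d) → Z → ℝ)
    (z : Fin n → Z) (j : Fin n) (z' : Z) (ztr ztest : Z)
    (θ : EuclideanSpace ℝ (Fin d)) : ℝ :=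
  -⟪gradient (fun θ' => ℓ θ' ztest) θ,
    Ring.inverse (empHessPert ℓ z j z' θ) (gradient (fun θ' => ℓ θ' ztr) θ)⟫

/-
Strong convexity does all the work. The empirical Hessians at the two minimizers are
`m`-coercive, so they are invertible with inverses of norm at most `1 / m`. Adding the quadratic
growth bounds of `ℓ̂` at `θ̂` and of `ℓ̂′` at `θ̂′` leaves only the swapped data point, whence
`‖θ̂′ - θ̂‖ ≤ 2L / (mn)`, and the two Hessians then differ by at most `M ‖θ̂′ - θ̂‖ + 2B / n`.
With `u`, `v` the test and training gradients, the score difference splits as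
`⟪u′ - u, H′⁻¹ v′⟫ + ⟪u, H′⁻¹ (v′ - v)⟫ + ⟪u, (H′⁻¹ - H⁻¹) v⟫`, and each term is of order `1 / n`
because `u′ - u`, `v′ - v` are `O(‖θ̂′ - θ̂‖)` and `H′⁻¹ - H⁻¹ = H′⁻¹ (H - H′) H⁻¹`.
-/

open Set

theorem ConvexOn.apply_sub_le_sub_of_hasFDerivAt {E : Type*} [NormedAddCommGroup E]
    [NormedSpace ℝ E] {s : Set E} {f : E → ℝ} {f' : E →L[ℝ] ℝ} {x y : E}
    (hf : ConvexOn ℝ s f) (hx : x ∈ s) (hy : y ∈ s)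
    (hd : HasFDerivAt f f' x) : f' (y - x) ≤ f y - f x := by
  let γ : ℝ →ᵃ[ℝ] E := AffineMap.lineMap x y
  have hγ : HasDerivAt (f ∘ γ) (f' (y - x)) 0 := by
    rw [← AffineMap.lineMap_apply_zero x y (k := ℝ)] at hd
    exact hd.comp_hasDerivAt 0 AffineMap.hasDerivAt_lineMap
  simpa [γ, slope_def_field] using (hf.comp_affineMap γ).le_slope_of_hasDerivAt
    (by simpa [γ] using hx) (by simpa [γ] using hy) zero_lt_one hγ

section StrongConvexity

variable {E : Type*} [NormedAddCommGroup E] [InnerProductSpace ℝ E]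
  {s : Set E} {m : ℝ} {f : E → ℝ} {f' : E →L[ℝ] ℝ} {x y : E}

theorem StrongConvexOn.apply_sub_add_le_sub_of_hasFDerivAt (hf : StrongConvexOn s m f)
    (hx : x ∈ s) (hy : y ∈ s) (hd : HasFDerivAt f f' x) :
    f' (y - x) + m / 2 * ‖y - x‖ ^ 2 ≤ f y - f x := by
  have hg := (strongConvexOn_iff_convex.1 hf).apply_sub_le_sub_of_hasFDerivAt hx hy
    (hd.sub ((hasStrictFDerivAt_norm_sq x).hasFDerivAt.const_mul (m / 2)))
  simp only [sub_apply, smul_apply, coe_innerSL_apply,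
    inner_sub_right, real_inner_self_eq_norm_sq, nsmul_eq_mul, Nat.cast_ofNat, smul_eq_mul] at hg
  rw [norm_sub_sq_real, real_inner_comm x y]
  linarith

theorem StrongConvexOn.mul_sq_norm_sub_le_sub_of_isLocalMin (hf : StrongConvexOn univ m f)
    (hd : DifferentiableAt ℝ f x) (hmin : IsLocalMin f x) (y : E) :
    m / 2 * ‖y - x‖ ^ 2 ≤ f y - f x := by
  simpa [hmin.hasFDerivAt_eq_zero hd.hasFDerivAt] using
    hf.apply_sub_add_le_sub_of_hasFDerivAt (mem_univ x) (mem_univ y) hd.hasFDerivAt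

theorem StrongConvexOn.mul_sq_norm_sub_le_sub_sub_of_isLocalMin {g : E → ℝ}
    (hf : StrongConvexOn univ m f) (hg : StrongConvexOn univ m g)
    (hfx : DifferentiableAt ℝ f x) (hgy : DifferentiableAt ℝ g y)
    (hx : IsLocalMin f x) (hy : IsLocalMin g y) :
    m * ‖y - x‖ ^ 2 ≤ (f y - g y) - (f x - g x) := by
  have hfy := hf.mul_sq_norm_sub_le_sub_of_isLocalMin hfx hx y
  have hgx := hg.mul_sq_norm_sub_le_sub_of_isLocalMin hgy hy x
  rw [norm_sub_rev] at hgx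
  linarith

theorem HasFDerivAt.mul_sq_norm_le_inner_apply {F : E → E} {F' : E →L[ℝ] E}
    (hF : HasFDerivAt F F' x) (hmono : ∀ y, m * ‖y - x‖ ^ 2 ≤ ⟪F y - F x, y - x⟫) (v : E) :
    m * ‖v‖ ^ 2 ≤ ⟪F' v, v⟫ := by
  have hline : HasDerivAt (fun t : ℝ => ⟪F (x + t • v), v⟫) ⟪F' v, v⟫ 0 := by
    have hγ : HasDerivAt (fun t : ℝ => x + t • v) v 0 := by
      simpa using ((hasDerivAt_id (0 : ℝ)).smul_const v).const_add x
    rw [← show x + (0 : ℝ) • v = x by simp] at hF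
    simpa using (hF.comp_hasDerivAt 0 hγ).inner ℝ (hasDerivAt_const 0 v)
  refine ge_of_tendsto ((hasDerivAt_iff_tendsto_slope.1 hline).mono_left
    (nhdsWithin_mono 0 fun t (ht : t ∈ Ioi 0) => ht.ne')) ?_
  filter_upwards [self_mem_nhdsWithin] with t (ht : 0 < t)
  have h := hmono (x + t • v)
  rw [add_sub_cancel_left, norm_smul, inner_smul_right, Real.norm_of_nonneg ht.le] at h
  rw [slope_def_field, sub_zero, zero_smul, add_zero, ← inner_sub_left, le_div_iff₀ ht]
  nlinarith

variable [CompleteSpace E]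

theorem StrongConvexOn.mul_sq_norm_sub_le_inner_gradient_sub (hf : StrongConvexOn univ m f)
    (hx : DifferentiableAt ℝ f x) (hy : DifferentiableAt ℝ f y) :
    m * ‖y - x‖ ^ 2 ≤ ⟪gradient f y - gradient f x, y - x⟫ := by
  have hxy := hf.apply_sub_add_le_sub_of_hasFDerivAt (mem_univ x) (mem_univ y) hx.hasFDerivAt
  have hyx := hf.apply_sub_add_le_sub_of_hasFDerivAt (mem_univ y) (mem_univ x) hy.hasFDerivAt
  rw [← neg_sub y x, map_neg, norm_neg] at hyx
  rw [inner_sub_left, inner_gradient_left, inner_gradient_left]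
  linarith

end StrongConvexity

theorem Ring.norm_inverse_sub_inverse_le {R : Type*} [SeminormedRing R] {a b : R}
    (h : IsUnit a ↔ IsUnit b) :
    ‖Ring.inverse a - Ring.inverse b‖ ≤ ‖Ring.inverse a‖ * ‖b - a‖ * ‖Ring.inverse b‖ := by
  rw [Ring.inverse_sub_inverse h]
  exact (norm_mul_le _ _).trans (mul_le_mul_of_nonneg_right (norm_mul_le _ _) (norm_nonneg _))

namespace ContinuousLinearMap

variable {E : Type*} [NormedAddCommGroup E] [InnerProductSpace ℝ E] {m : ℝ} {A : E →L[ℝ] E}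

theorem abs_inner_apply_sub_inner_apply_le (u u' v v' : E) (P P' : E →L[ℝ] E) :
    |⟪u', P' v'⟫ - ⟪u, P v⟫| ≤
      ‖u' - u‖ * (‖P'‖ * ‖v'‖) + ‖u‖ * (‖P'‖ * ‖v' - v‖) + ‖u‖ * (‖P' - P‖ * ‖v‖) := by
  have hsplit : ⟪u', P' v'⟫ - ⟪u, P v⟫ = ⟪u' - u, P' v'⟫ + ⟪u, P' (v' - v)⟫ + ⟪u, (P' - P) v⟫ := by
    simp only [inner_sub_left, inner_sub_right, map_sub, sub_apply]
    ring
  rw [hsplit]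
  refine (abs_add_three _ _ _).trans (add_le_add_three ?_ ?_ ?_) <;>
    exact (abs_real_inner_le_norm _ _).trans
      (mul_le_mul_of_nonneg_left (le_opNorm _ _) (norm_nonneg _))

theorem mul_norm_le_norm_apply_of_coercive (hA : ∀ v, m * ‖v‖ ^ 2 ≤ ⟪A v, v⟫) (v : E) :
    m * ‖v‖ ≤ ‖A v‖ := by
  rcases (norm_nonneg v).eq_or_lt with hv | hv
  · simp [← hv]
  · refine le_of_mul_le_mul_right ?_ hv
    nlinarith [hA v, real_inner_le_norm (A v) v]

theorem isUnit_of_coercive [FiniteDimensional ℝ E] (hm : 0 < m)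
    (hA : ∀ v, m * ‖v‖ ^ 2 ≤ ⟪A v, v⟫) : IsUnit A := by
  have hinj : Function.Injective A := by
    refine (injective_iff_map_eq_zero A).2 fun v hv => norm_le_zero_iff.1 ?_
    have := mul_norm_le_norm_apply_of_coercive hA v
    rw [hv, norm_zero] at this
    nlinarith [norm_nonneg v]
  exact isUnit_iff_bijective.2 ⟨hinj, LinearMap.injective_iff_surjective.1 hinj⟩

theorem norm_inverse_le_of_coercive [FiniteDimensional ℝ E] (hm : 0 < m)
    (hA : ∀ v, m * ‖v‖ ^ 2 ≤ ⟪A v, v⟫) : ‖Ring.inverse A‖ ≤ m⁻¹ := by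
  refine opNorm_le_bound _ (inv_nonneg.2 hm.le) fun w => ?_
  have h := mul_norm_le_norm_apply_of_coercive hA (Ring.inverse A w)
  rw [← mul_apply_eq_comp, Ring.mul_inverse_cancel A (isUnit_of_coercive hm hA),
    one_apply_eq_self] at h
  rwa [inv_mul_eq_div, le_div_iff₀' hm]

theorem norm_inverse_sub_inverse_le_of_coercive [FiniteDimensional ℝ E] {A' : E →L[ℝ] E}
    (hm : 0 < m) (hA : ∀ v, m * ‖v‖ ^ 2 ≤ ⟪A v, v⟫)
    (hA' : ∀ v, m * ‖v‖ ^ 2 ≤ ⟪A' v, v⟫) :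
    ‖Ring.inverse A' - Ring.inverse A‖ ≤ ‖A' - A‖ / m ^ 2 :=
  calc ‖Ring.inverse A' - Ring.inverse A‖
      ≤ ‖Ring.inverse A'‖ * ‖A - A'‖ * ‖Ring.inverse A‖ :=
        Ring.norm_inverse_sub_inverse_le
          (iff_of_true (isUnit_of_coercive hm hA') (isUnit_of_coercive hm hA))
    _ ≤ m⁻¹ * ‖A - A'‖ * m⁻¹ := by
        gcongr
        exacts [norm_inverse_le_of_coercive hm hA', norm_inverse_le_of_coercive hm hA]
    _ = ‖A' - A‖ / m ^ 2 := by rw [norm_sub_rev]; field_simp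

end ContinuousLinearMap

section Gradient

variable {F : Type*} [NormedAddCommGroup F] [InnerProductSpace ℝ F] [CompleteSpace F]
  {f g : F → ℝ} {x : F}

theorem gradient_fun_add (hf : DifferentiableAt ℝ f x) (hg : DifferentiableAt ℝ g x) :
    gradient (fun y => f y + g y) x = gradient f x + gradient g x := by
  simp only [gradient, fderiv_fun_add hf hg, map_add]

theorem gradient_fun_const_mul (hf : DifferentiableAt ℝ f x) (c : ℝ) :
    gradient (fun y => c * f y) x = c • gradient f x := by
  simp only [gradient, fderiv_const_mul hf c, map_smul]

theorem gradient_fun_sum {ι : Type*} {s : Finset ι} {f : ι → F → ℝ}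
    (hf : ∀ i ∈ s, DifferentiableAt ℝ (f i) x) :
    gradient (fun y => ∑ i ∈ s, f i y) x = ∑ i ∈ s, gradient (f i) x := by
  simp only [gradient, fderiv_fun_sum hf, map_sum]

theorem ContDiff.differentiable_gradient (hf : ContDiff ℝ 2 f) :
    Differentiable ℝ (gradient f) :=
  (InnerProductSpace.toDual ℝ F).symm.toContinuousLinearEquiv.differentiable.comp
    ((hf.fderiv_right (m := 1) (by norm_num)).differentiable (by norm_num))

end Gradient

section Hessian

variable {d : ℕ} {m : ℝ} {f g : EuclideanSpace ℝ (Fin d) → ℝ} {θ : EuclideanSpace ℝ (Fin d)}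

theorem StrongConvexOnUniv.strongConvexOn (hf : StrongConvexOnUniv m f) : StrongConvexOn univ m f :=
  strongConvexOn_iff_convex.2 hf

theorem hessian_fun_add (hf : ContDiff ℝ 2 f) (hg : ContDiff ℝ 2 g) :
    hessian (fun y => f y + g y) θ = hessian f θ + hessian g θ := by
  have hgrad : (fun y => gradient (fun y => f y + g y) y) = fun y => gradient f y + gradient g y :=
    funext fun y => gradient_fun_add (hf.differentiable two_ne_zero y)
      (hg.differentiable two_ne_zero y)
  rw [hessian, hgrad, fderiv_fun_add (hf.differentiable_gradient θ) (hg.differentiable_gradient θ)]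
  rfl

theorem hessian_fun_const_mul (hf : ContDiff ℝ 2 f) (c : ℝ) :
    hessian (fun y => c * f y) θ = c • hessian f θ := by
  have hgrad : (fun y => gradient (fun y => c * f y) y) = fun y => c • gradient f y :=
    funext fun y => gradient_fun_const_mul (hf.differentiable two_ne_zero y) c
  rw [hessian, hgrad, fderiv_fun_const_smul (hf.differentiable_gradient θ)]
  rfl

theorem hessian_fun_sum {ι : Type*} {s : Finset ι} {f : ι → EuclideanSpace ℝ (Fin d) → ℝ}
    (hf : ∀ i ∈ s, ContDiff ℝ 2 (f i)) :
    hessian (fun y => ∑ i ∈ s, f i y) θ = ∑ i ∈ s, hessian (f i) θ := by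
  have hgrad : (fun y => gradient (fun y => ∑ i ∈ s, f i y) y) =
      fun y => ∑ i ∈ s, gradient (f i) y :=
    funext fun y => gradient_fun_sum fun i hi => (hf i hi).differentiable two_ne_zero y
  rw [hessian, hgrad, fderiv_fun_sum fun i hi => (hf i hi).differentiable_gradient θ]
  rfl

theorem StrongConvexOn.mul_sq_norm_le_inner_hessian (hsc : StrongConvexOn Set.univ m f)
    (hf : ContDiff ℝ 2 f) (θ v : EuclideanSpace ℝ (Fin d)) :
    m * ‖v‖ ^ 2 ≤ ⟪hessian f θ v, v⟫ :=
  (hf.differentiable_gradient θ).hasFDerivAt.mul_sq_norm_le_inner_apply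
    (fun y => hsc.mul_sq_norm_sub_le_inner_gradient_sub (hf.differentiable two_ne_zero θ)
      (hf.differentiable two_ne_zero y)) v

end Hessian

section EmpiricalRisk

variable {d n : ℕ} {Z : Type*} {ℓ : EuclideanSpace ℝ (Fin d) → Z → ℝ} {z : Fin n → Z}
  {j : Fin n} {z' : Z}

theorem contDiff_empLoss (hℓ : ∀ ζ, ContDiff ℝ 2 fun θ => ℓ θ ζ) :
    ContDiff ℝ 2 (empLoss ℓ z) :=
  contDiff_const.mul (ContDiff.sum fun k _ => hℓ (z k))

theorem contDiff_empLossPert (hℓ : ∀ ζ, ContDiff ℝ 2 fun θ => ℓ θ ζ) :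
    ContDiff ℝ 2 (empLossPert ℓ z j z') :=
  (contDiff_const.mul (ContDiff.sum fun k _ => hℓ (z k))).add (contDiff_const.mul (hℓ z'))

theorem hessian_empLoss (hℓ : ∀ ζ, ContDiff ℝ 2 fun θ => ℓ θ ζ) (θ : EuclideanSpace ℝ (Fin d)) :
    hessian (empLoss ℓ z) θ = empHess ℓ z θ := by
  change hessian (fun y => 1 / (n : ℝ) * ∑ k, ℓ y (z k)) θ = _
  rw [hessian_fun_const_mul (ContDiff.sum fun k _ => hℓ (z k)),
    hessian_fun_sum fun k _ => hℓ (z k)]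
  rfl

theorem hessian_empLossPert (hℓ : ∀ ζ, ContDiff ℝ 2 fun θ => ℓ θ ζ)
    (θ : EuclideanSpace ℝ (Fin d)) :
    hessian (empLossPert ℓ z j z') θ = empHessPert ℓ z j z' θ := by
  have hsum : ContDiff ℝ 2 fun y => ∑ k ∈ Finset.univ.erase j, ℓ y (z k) :=
    ContDiff.sum fun k _ => hℓ (z k)
  change hessian (fun y => 1 / (n : ℝ) * ∑ k ∈ Finset.univ.erase j, ℓ y (z k) +
    1 / (n : ℝ) * ℓ y z') θ = _
  rw [hessian_fun_add (contDiff_const.mul hsum) (contDiff_const.mul (hℓ z')),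
    hessian_fun_const_mul hsum, hessian_fun_const_mul (hℓ z'), hessian_fun_sum fun k _ => hℓ (z k)]
  rfl

theorem empLoss_sub_empLossPert (θ : EuclideanSpace ℝ (Fin d)) :
    empLoss ℓ z θ - empLossPert ℓ z j z' θ = (ℓ θ (z j) - ℓ θ z') / n := by
  rw [empLoss, empLossPert, ← Finset.add_sum_erase _ _ (Finset.mem_univ j)]
  ring

theorem empHessPert_sub_empHess (θ θ' : EuclideanSpace ℝ (Fin d)) :
    empHessPert ℓ z j z' θ' - empHess ℓ z θ =
      (1 / (n : ℝ)) • ∑ k, (hessian (fun y => ℓ y (z k)) θ' - hessian (fun y => ℓ y (z k)) θ) +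
        (1 / (n : ℝ)) • (hessian (fun y => ℓ y z') θ' - hessian (fun y => ℓ y (z j)) θ') := by
  rw [empHessPert, empHess, Finset.sum_sub_distrib,
    ← Finset.add_sum_erase _ (fun k => hessian (fun y => ℓ y (z k)) θ') (Finset.mem_univ j)]
  simp only [smul_sub, smul_add]
  abel

end EmpiricalRisk

section Stability

variable {d n : ℕ} {Z : Type*} {ℓ : EuclideanSpace ℝ (Fin d) → Z → ℝ} {z : Fin n → Z}
  {j : Fin n} {z' : Z} {m L M B : ℝ} {θ θ' : EuclideanSpace ℝ (Fin d)}

theorem norm_sub_minimizers_le (hℓ : ∀ ζ, ContDiff ℝ 2 fun θ => ℓ θ ζ)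
    (hm : 0 < m) (hL : 0 ≤ L)
    (hsc : StrongConvexOnUniv m (empLoss ℓ z)) (hsc' : StrongConvexOnUniv m (empLossPert ℓ z j z'))
    (hmin : ∀ η, empLoss ℓ z θ ≤ empLoss ℓ z η)
    (hmin' : ∀ η, empLossPert ℓ z j z' θ' ≤ empLossPert ℓ z j z' η)
    (hlip₁ : |ℓ θ' (z j) - ℓ θ (z j)| ≤ L * ‖θ' - θ‖)
    (hlip₂ : |ℓ θ z' - ℓ θ' z'| ≤ L * ‖θ' - θ‖) :
    ‖θ' - θ‖ ≤ 2 * L / (m * n) := by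
  have hn : (0 : ℝ) < n := Nat.cast_pos.2 j.pos
  have hgrowth := hsc.strongConvexOn.mul_sq_norm_sub_le_sub_sub_of_isLocalMin hsc'.strongConvexOn
    ((contDiff_empLoss hℓ).differentiable two_ne_zero θ)
    ((contDiff_empLossPert hℓ).differentiable two_ne_zero θ')
    (Filter.Eventually.of_forall hmin) (Filter.Eventually.of_forall hmin')
  rw [empLoss_sub_empLossPert, empLoss_sub_empLossPert, ← sub_div] at hgrowth
  have hlip : ℓ θ' (z j) - ℓ θ' z' - (ℓ θ (z j) - ℓ θ z') ≤ 2 * L * ‖θ' - θ‖ := by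
    linarith [le_abs_self (ℓ θ' (z j) - ℓ θ (z j)), le_abs_self (ℓ θ z' - ℓ θ' z')]
  rcases (norm_nonneg (θ' - θ)).eq_or_lt with h0 | hpos
  · rw [← h0]
    positivity
  · rw [le_div_iff₀ (by positivity)]
    rw [le_div_iff₀ hn] at hgrowth
    nlinarith

theorem norm_empHessPert_sub_empHess_le
    (hhessLip : ∀ k : Fin n,
      ‖hessian (fun y => ℓ y (z k)) θ' - hessian (fun y => ℓ y (z k)) θ‖ ≤ M * ‖θ' - θ‖)
    (hB : ‖hessian (fun y => ℓ y (z j)) θ'‖ ≤ B) (hB' : ‖hessian (fun y => ℓ y z') θ'‖ ≤ B) :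
    ‖empHessPert ℓ z j z' θ' - empHess ℓ z θ‖ ≤ M * ‖θ' - θ‖ + 2 * B / n := by
  have hn : (0 : ℝ) < n := Nat.cast_pos.2 j.pos
  have hsum : ‖∑ k, (hessian (fun y => ℓ y (z k)) θ' - hessian (fun y => ℓ y (z k)) θ)‖ ≤
      n * (M * ‖θ' - θ‖) := by
    simpa using (norm_sum_le Finset.univ _).trans (Finset.sum_le_sum fun k _ => hhessLip k)
  have hswap : ‖hessian (fun y => ℓ y z') θ' - hessian (fun y => ℓ y (z j)) θ'‖ ≤ 2 * B :=
    (norm_sub_le _ _).trans (by linarith)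
  rw [empHessPert_sub_empHess]
  refine (norm_add_le _ _).trans ?_
  rw [norm_smul, norm_smul, Real.norm_of_nonneg (by positivity)]
  calc 1 / (n : ℝ) * ‖∑ k, (hessian (fun y => ℓ y (z k)) θ' - hessian (fun y => ℓ y (z k)) θ)‖ +
        1 / n * ‖hessian (fun y => ℓ y z') θ' - hessian (fun y => ℓ y (z j)) θ'‖
      ≤ 1 / n * (n * (M * ‖θ' - θ‖)) + 1 / n * (2 * B) := by gcongr
    _ = M * ‖θ' - θ‖ + 2 * B / n := by field_simp

end Stability

theorem stmt_9_general {d n : ℕ} {Z : Type*} (z : Fin n → Z) (i j : Fin n)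
    (z' : Z) (ztest : Z)
    (ℓ : EuclideanSpace ℝ (Fin d) → Z → ℝ)
    (hC2 : ∀ zz : Z, ContDiff ℝ 2 (fun θ => ℓ θ zz))
    (m L M B G S : ℝ) (hm : 0 < m) (hL : 0 < L) (hM : 0 < M)
    (hG : 0 < G) (hS : 0 < S)
    (θhat θhat' : EuclideanSpace ℝ (Fin d))
    (hsc : StrongConvexOnUniv m (empLoss ℓ z))
    (hsc' : StrongConvexOnUniv m (empLossPert ℓ z j z'))
    (hmin : ∀ θ, empLoss ℓ z θhat ≤ empLoss ℓ z θ)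
    (hmin' : ∀ θ, empLossPert ℓ z j z' θhat' ≤ empLossPert ℓ z j z' θ)
    (hlip₁ : |ℓ θhat' (z j) - ℓ θhat (z j)| ≤ L * ‖θhat' - θhat‖)
    (hlip₂ : |ℓ θhat z' - ℓ θhat' z'| ≤ L * ‖θhat' - θhat‖)
    (hhessLip : ∀ k : Fin n,
      ‖hessian (fun θ' => ℓ θ' (z k)) θhat' - hessian (fun θ' => ℓ θ' (z k)) θhat‖ ≤
        M * ‖θhat' - θhat‖)
    (hhessB₁ : ‖hessian (fun θ' => ℓ θ' (z j)) θhat'‖ ≤ B)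
    (hhessB₂ : ‖hessian (fun θ' => ℓ θ' z') θhat'‖ ≤ B)
    (hgradB₁ : ‖gradient (fun θ' => ℓ θ' ztest) θhat‖ ≤ G)
    (hgradB₃ : ‖gradient (fun θ' => ℓ θ' (z i)) θhat‖ ≤ G)
    (hgradB₄ : ‖gradient (fun θ' => ℓ θ' (z i)) θhat'‖ ≤ G)
    (hgradLip₁ : ‖gradient (fun θ' => ℓ θ' ztest) θhat' -
        gradient (fun θ' => ℓ θ' ztest) θhat‖ ≤ S * ‖θhat' - θhat‖)
    (hgradLip₂ : ‖gradient (fun θ' => ℓ θ' (z i)) θhat' -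
        gradient (fun θ' => ℓ θ' (z i)) θhat‖ ≤ S * ‖θhat' - θhat‖) :
    |tauIFPert ℓ z j z' (z i) ztest θhat' - tauIF ℓ z (z i) ztest θhat| ≤
      (8 * G * L * S * m + 4 * G ^ 2 * L * M + 2 * G ^ 2 * B * m) / (m ^ 3 * n) := by
  have hn : (0 : ℝ) < n := Nat.cast_pos.2 j.pos
  have hH : ∀ v, m * ‖v‖ ^ 2 ≤ ⟪empHess ℓ z θhat v, v⟫ := by
    simpa only [hessian_empLoss hC2] using
      hsc.strongConvexOn.mul_sq_norm_le_inner_hessian (contDiff_empLoss hC2) θhat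
  have hH' : ∀ v, m * ‖v‖ ^ 2 ≤ ⟪empHessPert ℓ z j z' θhat' v, v⟫ := by
    simpa only [hessian_empLossPert hC2] using
      hsc'.strongConvexOn.mul_sq_norm_le_inner_hessian (contDiff_empLossPert hC2) θhat'
  have hD := norm_sub_minimizers_le hC2 hm hL.le hsc hsc' hmin hmin' hlip₁ hlip₂
  have hinv : ‖Ring.inverse (empHessPert ℓ z j z' θhat') - Ring.inverse (empHess ℓ z θhat)‖ ≤
      (M * ‖θhat' - θhat‖ + 2 * B / n) / m ^ 2 :=
    (ContinuousLinearMap.norm_inverse_sub_inverse_le_of_coercive hm hH hH').trans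
      (by gcongr; exact norm_empHessPert_sub_empHess_le hhessLip hhessB₁ hhessB₂)
  have hinv' := ContinuousLinearMap.norm_inverse_le_of_coercive hm hH'
  rw [tauIFPert, tauIF, neg_sub_neg, abs_sub_comm]
  calc _ ≤ _ := ContinuousLinearMap.abs_inner_apply_sub_inner_apply_le _ _ _ _ _ _
    _ ≤ S * ‖θhat' - θhat‖ * (m⁻¹ * G) + G * (m⁻¹ * (S * ‖θhat' - θhat‖)) +
          G * ((M * ‖θhat' - θhat‖ + 2 * B / n) / m ^ 2 * G) := by
        gcongr
        exact (norm_nonneg _).trans hinv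
    _ ≤ S * (2 * L / (m * n)) * (m⁻¹ * G) + G * (m⁻¹ * (S * (2 * L / (m * n)))) +
          G * ((M * (2 * L / (m * n)) + 2 * B / n) / m ^ 2 * G) := by
        gcongr
    _ ≤ _ := by
        field_simp
        nlinarith [mul_pos (mul_pos hL hS) hm, mul_pos (mul_pos hG hL) hM]

/-- Influence-score stability for an unperturbed training point `z i`, `i ≠ j`: under
strong convexity of both empirical losses, Lipschitz bounds on the swapped losses,
`M`-Lipschitzness and `B`-boundedness of the per-sample Hessians, and `G`-boundedness and
`S`-Lipschitzness of the relevant gradients, the influence scores before and after the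
perturbation satisfy
`|τ′(zᵢ, z_test; θ̂′) - τ(zᵢ, z_test; θ̂)| ≤ (8GLSm + 4G²LM + 2G²Bm)/(m³n) = O(1/n)`. -/
theorem stmt_9 {d n : ℕ} (hn : 1 ≤ n) {Z : Type*} (z : Fin n → Z) (i j : Fin n)
    (hij : i ≠ j) (z' : Z) (ztest : Z)
    (ℓ : EuclideanSpace ℝ (Fin d) → Z → ℝ)
    (hC2 : ∀ zz : Z, ContDiff ℝ 2 (fun θ => ℓ θ zz))
    (m L M B G S : ℝ) (hm : 0 < m) (hL : 0 < L) (hM : 0 < M) (hB : 0 < B)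
    (hG : 0 < G) (hS : 0 < S)
    (θhat θhat' : EuclideanSpace ℝ (Fin d))
    (hsc : StrongConvexOnUniv m (empLoss ℓ z))
    (hsc' : StrongConvexOnUniv m (empLossPert ℓ z j z'))
    (hmin : ∀ θ, empLoss ℓ z θhat ≤ empLoss ℓ z θ)
    (hmin' : ∀ θ, empLossPert ℓ z j z' θhat' ≤ empLossPert ℓ z j z' θ)
    (hlip₁ : |ℓ θhat' (z j) - ℓ θhat (z j)| ≤ L * ‖θhat' - θhat‖)
    (hlip₂ : |ℓ θhat z' - ℓ θhat' z'| ≤ L * ‖θhat' - θhat‖)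
    (hhessLip : ∀ k : Fin n,
      ‖hessian (fun θ' => ℓ θ' (z k)) θhat' - hessian (fun θ' => ℓ θ' (z k)) θhat‖ ≤
        M * ‖θhat' - θhat‖)
    (hhessB₁ : ‖hessian (fun θ' => ℓ θ' (z j)) θhat'‖ ≤ B)
    (hhessB₂ : ‖hessian (fun θ' => ℓ θ' z') θhat'‖ ≤ B)
    (hgradB₁ : ‖gradient (fun θ' => ℓ θ' ztest) θhat‖ ≤ G)
    (hgradB₂ : ‖gradient (fun θ' => ℓ θ' ztest) θhat'‖ ≤ G)
    (hgradB₃ : ‖gradient (fun θ' => ℓ θ' (z i)) θhat‖ ≤ G)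
    (hgradB₄ : ‖gradient (fun θ' => ℓ θ' (z i)) θhat'‖ ≤ G)
    (hgradLip₁ : ‖gradient (fun θ' => ℓ θ' ztest) θhat' -
        gradient (fun θ' => ℓ θ' ztest) θhat‖ ≤ S * ‖θhat' - θhat‖)
    (hgradLip₂ : ‖gradient (fun θ' => ℓ θ' (z i)) θhat' -
        gradient (fun θ' => ℓ θ' (z i)) θhat‖ ≤ S * ‖θhat' - θhat‖) :
    |tauIFPert ℓ z j z' (z i) ztest θhat' - tauIF ℓ z (z i) ztest θhat| ≤
      (8 * G * L * S * m + 4 * G ^ 2 * L * M + 2 * G ^ 2 * B * m) / (m ^ 3 * n) :=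
  stmt_9_general z i j z' ztest ℓ hC2 m L M B G S hm hL hM hG hS θhat θhat' hsc hsc' hmin hmin'
    hlip₁ hlip₂ hhessLip hhessB₁ hhessB₂ hgradB₁ hgradB₃ hgradB₄ hgradLip₁ hgradLip₂
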